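/- arXiv:1702.04921 — 4 statements merged into one kernel-verified Lean document; each statement's English description precedes it below -/
import Mathlib

section
/- For a nonincreasingly sorted nonnegative vector x ∈ ℝ^n and any k ∈ {1,…,n−1} with ∑_{i=1}^{k} x_i > 0 and ∑_{i=1}^{k+1} x_i > 0, it holds that (∑_{i=1}^{k+1} x_i²)/(∑_{i=1}^{k+1} x_i) ≤ (∑_{i=1}^{k} x_i²)/(∑_{i=1}^{k} x_i); i.e., the ratio of the partial sum of squares to the partial sum is nonincreasing in k. -/
/- Adding the entry t = x_{k+1} turns the ratio A/B of the sum of squares to the sum into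
(A + t²)/(B + t). Since the vector is sorted, t is at most every earlier entry, so B t ≤ A,
i.e. t ≤ A/B, and a mediant of A/B with t²/t = t ≤ A/B cannot exceed A/B. -/

open Finset

theorem add_sq_div_add_le_div {A B t : ℝ} (hB : 0 < B) (ht : 0 ≤ t) (htA : B * t ≤ A) :
    (A + t ^ 2) / (B + t) ≤ A / B := by
  rw [div_le_div_iff₀ (by positivity) hB]
  nlinarith [mul_le_mul_of_nonneg_right htA ht]

theorem sum_mul_le_sum_sq {ι : Type*} {s : Finset ι} {x : ι → ℝ} {t : ℝ} (ht : 0 ≤ t)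
    (hle : ∀ i ∈ s, t ≤ x i) : (∑ i ∈ s, x i) * t ≤ ∑ i ∈ s, x i ^ 2 := by
  rw [sum_mul]
  refine sum_le_sum fun i hi => ?_
  rw [sq]
  exact mul_le_mul_of_nonneg_left (hle i hi) (ht.trans (hle i hi))

theorem Fin.sum_filter_val_lt_succ {M : Type*} [AddCommMonoid M] {n k : ℕ} (hkn : k < n)
    (f : Fin n → M) :
    ∑ i ∈ univ.filter (fun i : Fin n => (i : ℕ) < k + 1), f i
      = ∑ i ∈ univ.filter (fun i : Fin n => (i : ℕ) < k), f i + f ⟨k, hkn⟩ := by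
  have hsplit : univ.filter (fun i : Fin n => (i : ℕ) < k + 1)
      = insert ⟨k, hkn⟩ (univ.filter (fun i : Fin n => (i : ℕ) < k)) := by
    ext i
    simp only [mem_filter, mem_insert, mem_univ, true_and, Fin.ext_iff]
    omega
  rw [hsplit, sum_insert (by simp), add_comm]

theorem ratio_prefix_sq_div_prefix_antitone_general
    (n : ℕ) (x : Fin n → ℝ)
    (hsort : ∀ i j : Fin n, i ≤ j → x j ≤ x i)
    (hnonneg : ∀ i, 0 ≤ x i)
    (k : ℕ) (hkn : k < n)
    (hpos : 0 < ∑ i ∈ Finset.univ.filter (fun i : Fin n => (i : ℕ) < k), x i) :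
    (∑ i ∈ Finset.univ.filter (fun i : Fin n => (i : ℕ) < k + 1), (x i) ^ 2)
        / (∑ i ∈ Finset.univ.filter (fun i : Fin n => (i : ℕ) < k + 1), x i)
      ≤ (∑ i ∈ Finset.univ.filter (fun i : Fin n => (i : ℕ) < k), (x i) ^ 2)
        / (∑ i ∈ Finset.univ.filter (fun i : Fin n => (i : ℕ) < k), x i) := by
  rw [Fin.sum_filter_val_lt_succ hkn, Fin.sum_filter_val_lt_succ hkn]
  refine add_sq_div_add_le_div hpos (hnonneg _) (sum_mul_le_sum_sq (hnonneg _) fun i hi => ?_)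
  exact hsort _ _ (Fin.le_def.mpr (mem_filter.mp hi).2.le)

/-- For a nonincreasingly sorted nonnegative vector x ∈ ℝ^n and
any k ∈ {1,…,n−1} with positive k-th and (k+1)-th prefix sums, the ratio of the
partial sum of squares to the partial sum is nonincreasing in k. -/
theorem ratio_prefix_sq_div_prefix_antitone
    (n : ℕ) (x : Fin n → ℝ)
    (hsort : ∀ i j : Fin n, i ≤ j → x j ≤ x i)
    (hnonneg : ∀ i, 0 ≤ x i)
    (k : ℕ) (hk1 : 1 ≤ k) (hkn : k < n)
    (hpos : 0 < ∑ i ∈ Finset.univ.filter (fun i : Fin n => (i : ℕ) < k), x i)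
    (hpos' : 0 < ∑ i ∈ Finset.univ.filter (fun i : Fin n => (i : ℕ) < k + 1), x i) :
    (∑ i ∈ Finset.univ.filter (fun i : Fin n => (i : ℕ) < k + 1), (x i) ^ 2)
        / (∑ i ∈ Finset.univ.filter (fun i : Fin n => (i : ℕ) < k + 1), x i)
      ≤ (∑ i ∈ Finset.univ.filter (fun i : Fin n => (i : ℕ) < k), (x i) ^ 2)
        / (∑ i ∈ Finset.univ.filter (fun i : Fin n => (i : ℕ) < k), x i) :=
  ratio_prefix_sq_div_prefix_antitone_general n x hsort hnonneg k hkn hpos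
end

section
/- Let x ∈ ℝ^n be a probability vector (nonnegative entries summing to 1) sorted in nonincreasing order. Then for every k ∈ {1,…,n} with ∑_{i=1}^{k} x_i > 0, we have ∑_{i=1}^{n} x_i² ≤ (∑_{i=1}^{k} x_i²)/(∑_{i=1}^{k} x_i). -/
/-! Split the coordinates into the first `k` (the head) and the rest (the tail). Every head entry
dominates every tail entry, so `x_b² x_a ≤ x_a² x_b` for each head `a` and tail `b`; summing gives
`(∑_tail x²)(∑_head x) ≤ (∑_head x²)(∑_tail x)`. Adding `(∑_head x²)(∑_head x)` to both sides and
using `∑ x = 1` is the claim. -/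

open Finset

section

variable {ι R : Type*} [CommSemiring R] [PartialOrder R] [IsOrderedRing R]

theorem sum_sq_mul_sum_le_sum_sq_mul_sum_of_forall_le (A B : Finset ι) (f : ι → R)
    (hA : ∀ a ∈ A, 0 ≤ f a) (hB : ∀ b ∈ B, 0 ≤ f b) (hle : ∀ a ∈ A, ∀ b ∈ B, f b ≤ f a) :
    (∑ b ∈ B, f b ^ 2) * ∑ a ∈ A, f a ≤ (∑ a ∈ A, f a ^ 2) * ∑ b ∈ B, f b := by
  rw [sum_mul_sum, sum_mul_sum, sum_comm]
  refine sum_le_sum fun a ha => sum_le_sum fun b hb => ?_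
  calc f b ^ 2 * f a = f a * f b * f b := by ring
    _ ≤ f a * f b * f a :=
      mul_le_mul_of_nonneg_left (hle a ha b hb) (mul_nonneg (hA a ha) (hB b hb))
    _ = f a ^ 2 * f b := by ring

theorem sum_sq_mul_sum_filter_le_sum_sq_filter_mul_sum (s : Finset ι) (p : ι → Prop)
    [DecidablePred p] (f : ι → R) (hf : ∀ i ∈ s, 0 ≤ f i)
    (hle : ∀ a ∈ s, p a → ∀ b ∈ s, ¬p b → f b ≤ f a) :
    (∑ i ∈ s, f i ^ 2) * ∑ i ∈ s with p i, f i ≤ (∑ i ∈ s with p i, f i ^ 2) * ∑ i ∈ s, f i := by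
  have key := sum_sq_mul_sum_le_sum_sq_mul_sum_of_forall_le (s.filter p) (s.filter (¬p ·)) f
    (fun a ha => hf a (mem_filter.1 ha).1) (fun b hb => hf b (mem_filter.1 hb).1)
    (fun a ha b hb => hle a (mem_filter.1 ha).1 (mem_filter.1 ha).2 b (mem_filter.1 hb).1
      (mem_filter.1 hb).2)
  rw [← sum_filter_add_sum_filter_not s p (fun i => f i ^ 2),
    ← sum_filter_add_sum_filter_not s p f, add_mul, mul_add]
  exact add_le_add le_rfl key

end

theorem sq_norm_le_prefix_ratio_general
    (n : ℕ) (x : Fin n → ℝ)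
    (hnonneg : ∀ i, 0 ≤ x i)
    (hsum : ∑ i, x i = 1)
    (hsort : ∀ i j : Fin n, i ≤ j → x j ≤ x i)
    (k : ℕ)
    (hpos : 0 < ∑ i ∈ Finset.univ.filter (fun i : Fin n => (i : ℕ) < k), x i) :
    (∑ i, (x i) ^ 2)
      ≤ (∑ i ∈ Finset.univ.filter (fun i : Fin n => (i : ℕ) < k), (x i) ^ 2)
        / (∑ i ∈ Finset.univ.filter (fun i : Fin n => (i : ℕ) < k), x i) := by
  rw [le_div_iff₀ hpos]
  have key := sum_sq_mul_sum_filter_le_sum_sq_filter_mul_sum univ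
    (fun i : Fin n => (i : ℕ) < k) x (fun i _ => hnonneg i)
    (fun a _ ha b _ hb => hsort a b (Fin.le_iff_val_le_val.2 (ha.le.trans (not_lt.1 hb))))
  rwa [hsum, mul_one] at key

/-- For a probability vector x ∈ ℝ^n sorted nonincreasingly and any
k ∈ {1,…,n} with positive k-th prefix sum,
∑_{i=1}^{n} x_i² ≤ (∑_{i=1}^{k} x_i²)/(∑_{i=1}^{k} x_i). -/
theorem sq_norm_le_prefix_ratio
    (n : ℕ) (x : Fin n → ℝ)
    (hnonneg : ∀ i, 0 ≤ x i)
    (hsum : ∑ i, x i = 1)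
    (hsort : ∀ i j : Fin n, i ≤ j → x j ≤ x i)
    (k : ℕ) (hk1 : 1 ≤ k) (hkn : k ≤ n)
    (hpos : 0 < ∑ i ∈ Finset.univ.filter (fun i : Fin n => (i : ℕ) < k), x i) :
    (∑ i, (x i) ^ 2)
      ≤ (∑ i ∈ Finset.univ.filter (fun i : Fin n => (i : ℕ) < k), (x i) ^ 2)
        / (∑ i ∈ Finset.univ.filter (fun i : Fin n => (i : ℕ) < k), x i) :=
  sq_norm_le_prefix_ratio_general n x hnonneg hsum hsort k hpos
end

section
/- Let x ∈ ℝ^n be a probability vector sorted in nonincreasing order, and define p ∈ ℝ^n by p_i = x_i² + (1 − ‖x‖₂²)·x_i, where ‖x‖₂² = ∑_j x_j². Then for every k ∈ {1,…,n}, ∑_{i=1}^{k} p_i ≥ ∑_{i=1}^{k} x_i. -/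
/-! With `A` the top-`k` colours and `B` the rest, `∑_A p - ∑_A x` rearranges (using `∑ x = 1`)
to `(∑_A x²)(∑_B x) - (∑_A x)(∑_B x²)`, which is a sum of the terms `xᵢ xⱼ (xᵢ - xⱼ) ≥ 0`
over `i ∈ A`, `j ∈ B`. -/

open Finset

variable {ι : Type*}

theorem sum_mul_sum_sq_le_sum_sq_mul_sum (s t : Finset ι) (f : ι → ℝ)
    (hf : ∀ j ∈ t, 0 ≤ f j) (hle : ∀ i ∈ s, ∀ j ∈ t, f j ≤ f i) :
    (∑ i ∈ s, f i) * ∑ j ∈ t, f j ^ 2 ≤ (∑ i ∈ s, f i ^ 2) * ∑ j ∈ t, f j := by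
  rw [sum_mul_sum, sum_mul_sum]
  refine sum_le_sum fun i hi => sum_le_sum fun j hj => ?_
  have hj0 := hf j hj
  have hji := hle i hi j hj
  have hi0 : 0 ≤ f i := hj0.trans hji
  nlinarith [mul_nonneg (mul_nonneg hi0 hj0) (sub_nonneg.2 hji)]

/-- Probability that a node holds colour `i` after one 3-Majority step from colour fractions `x`. -/
noncomputable def threeMajority [Fintype ι] (x : ι → ℝ) (i : ι) : ℝ :=
  x i ^ 2 + (1 - ∑ j, x j ^ 2) * x i

theorem sum_le_sum_threeMajority [Fintype ι] [DecidableEq ι] (x : ι → ℝ) (s : Finset ι)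
    (hsum : ∑ i, x i = 1) (hnonneg : ∀ j ∉ s, 0 ≤ x j)
    (hle : ∀ i ∈ s, ∀ j ∉ s, x j ≤ x i) :
    ∑ i ∈ s, x i ≤ ∑ i ∈ s, threeMajority x i := by
  have key := sum_mul_sum_sq_le_sum_sq_mul_sum s sᶜ x (by simpa using hnonneg) (by simpa using hle)
  rw [← sum_add_sum_compl s] at hsum
  simp only [threeMajority, sum_add_distrib, ← mul_sum, ← sum_add_sum_compl s fun j => x j ^ 2]
  linear_combination key + (∑ i ∈ s, x i ^ 2) * hsum

theorem threeMajority_prefix_ge_general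
    (n : ℕ) (x : Fin n → ℝ)
    (hnonneg : ∀ i, 0 ≤ x i)
    (hsum : ∑ i, x i = 1)
    (hsort : ∀ i j : Fin n, i ≤ j → x j ≤ x i)
    (p : Fin n → ℝ)
    (hp : ∀ i, p i = (x i) ^ 2 + (1 - ∑ j, (x j) ^ 2) * x i)
    (k : ℕ) :
    (∑ i ∈ Finset.univ.filter (fun i : Fin n => (i : ℕ) < k), x i)
      ≤ ∑ i ∈ Finset.univ.filter (fun i : Fin n => (i : ℕ) < k), p i := by
  obtain rfl : p = threeMajority x := funext hp
  refine sum_le_sum_threeMajority x _ hsum (fun j _ => hnonneg j) fun i hi j hj => hsort i j ?_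
  simp only [mem_filter, mem_univ, true_and] at hi hj
  exact Fin.le_def.2 (by omega)

/-- For a probability vector x ∈ ℝ^n sorted nonincreasingly and
p_i = x_i² + (1 − ‖x‖₂²)·x_i, every prefix sum of p dominates that of x. -/
theorem threeMajority_prefix_ge
    (n : ℕ) (x : Fin n → ℝ)
    (hnonneg : ∀ i, 0 ≤ x i)
    (hsum : ∑ i, x i = 1)
    (hsort : ∀ i j : Fin n, i ≤ j → x j ≤ x i)
    (p : Fin n → ℝ)
    (hp : ∀ i, p i = (x i) ^ 2 + (1 - ∑ j, (x j) ^ 2) * x i)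
    (k : ℕ) (hk1 : 1 ≤ k) (hkn : k ≤ n) :
    (∑ i ∈ Finset.univ.filter (fun i : Fin n => (i : ℕ) < k), x i)
      ≤ ∑ i ∈ Finset.univ.filter (fun i : Fin n => (i : ℕ) < k), p i :=
  threeMajority_prefix_ge_general n x hnonneg hsum hsort p hp k
end

section
/- Let γ ≥ 18, n ≥ 2, and let ℓ' ≥ γ·log n and ℓ ≤ ℓ'/2 be positive reals. Set p = (ℓ'/n)², t₀ = n/(γℓ'), and let B be a binomial random variable with t₀·n trials and success probability p. Then max{2·E[B], (γ/2)·log n} ≤ ℓ' − ℓ, and consequently P(B ≥ ℓ' − ℓ) ≤ exp(−(γ/6)·log n) ≤ n^{−3}. -/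
/-!
The binomial point masses satisfy `P(B = i) ≤ C(N, i) pⁱ ≤ μⁱ / i!` with `μ = N p`, and
`μⁱ / i! ≤ e^{cμ} c⁻ⁱ` for every `c > 0`; summing the geometric tail for `c > 1` gives the
Chernoff-type bound `P(B ≥ k) ≤ c / (c - 1) · exp (c μ - k log c)`. With `c = 9`, the mean bound
`μ ≤ ℓ' / γ ≤ ℓ' / 18` and `k = ℓ' - ℓ ≥ ℓ' / 2`, the exponent is at most `1 - ℓ' / 2`, which is
below `-ℓ' / 6 ≤ -(γ / 6) log n` because `ℓ' ≥ 18 log 2 > 3`.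
-/

open scoped NNReal Nat

set_option linter.deprecated false

open Finset in
lemma sum_Ico_pow_div_factorial_le {μ c : ℝ} (hμ : 0 ≤ μ) (hc : 1 < c) (m n : ℕ) :
    ∑ i ∈ Ico m n, μ ^ i / i ! ≤ c / (c - 1) * Real.exp (c * μ) * c⁻¹ ^ m := by
  have hc₀ : 0 < c := by linarith
  have hterm (i : ℕ) : μ ^ i / i ! ≤ Real.exp (c * μ) * c⁻¹ ^ i := by
    calc μ ^ i / i ! = (c * μ) ^ i / i ! * c⁻¹ ^ i := by
          rw [mul_pow, inv_pow]; field_simp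
      _ ≤ Real.exp (c * μ) * c⁻¹ ^ i := by
          gcongr; exact Real.pow_div_factorial_le_exp _ (by positivity) i
  calc ∑ i ∈ Ico m n, μ ^ i / i ! ≤ ∑ i ∈ Ico m n, Real.exp (c * μ) * c⁻¹ ^ i :=
        sum_le_sum fun i _ => hterm i
    _ = Real.exp (c * μ) * ∑ i ∈ Ico m n, c⁻¹ ^ i := (mul_sum ..).symm
    _ ≤ Real.exp (c * μ) * (c⁻¹ ^ m / (1 - c⁻¹)) := by
        gcongr; exact geom_sum_Ico_le_of_lt_one (by positivity) (inv_lt_one_of_one_lt₀ hc)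
    _ = c / (c - 1) * Real.exp (c * μ) * c⁻¹ ^ m := by
        have : c - 1 ≠ 0 := by linarith
        field_simp

namespace PMF

lemma binomial_apply_le_pow_div_factorial (p : ℝ≥0) (hp : p ≤ 1) (N : ℕ) (i : Fin (N + 1)) :
    binomial p hp N i ≤ ENNReal.ofReal ((N * p) ^ (i : ℕ) / (i : ℕ)!) := by
  rw [binomial, ofFintype_apply, ← ENNReal.ofReal_coe_nnreal]
  refine ENNReal.ofReal_le_ofReal ?_
  have hfailure : ((1 - p) ^ (N - i : ℕ) : ℝ≥0) ≤ 1 := pow_le_one₀ zero_le' tsub_le_self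
  calc ((p ^ (i : ℕ) * (1 - p) ^ (N - i : ℕ) * (N.choose i : ℕ) : ℝ≥0) : ℝ)
      ≤ p ^ (i : ℕ) * 1 * (N.choose i : ℝ) := by push_cast; gcongr; exact_mod_cast hfailure
    _ ≤ p ^ (i : ℕ) * 1 * ((N : ℝ) ^ (i : ℕ) / (i : ℕ)!) := by
        gcongr; exact Nat.choose_le_pow_div _ _
    _ = (N * p) ^ (i : ℕ) / (i : ℕ)! := by ring

open Finset in
lemma binomial_toOuterMeasure_le_sum (p : ℝ≥0) (hp : p ≤ 1) (N : ℕ) (k : ℝ) :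
    (binomial p hp N).toOuterMeasure {i | k ≤ (i : ℝ)}
      ≤ ENNReal.ofReal (∑ i ∈ Ico ⌈k⌉₊ (N + 1), (N * p : ℝ) ^ i / i !) := by
  calc (binomial p hp N).toOuterMeasure {i | k ≤ (i : ℝ)}
      = ∑ x, {i : Fin (N + 1) | k ≤ (i : ℝ)}.indicator (binomial p hp N) x :=
        toOuterMeasure_apply_fintype _ _
    _ ≤ ∑ x : Fin (N + 1),
          ENNReal.ofReal (if ⌈k⌉₊ ≤ (x : ℕ) then (N * p : ℝ) ^ (x : ℕ) / (x : ℕ)! else 0) := by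
        refine sum_le_sum fun x _ => ?_
        by_cases hx : ⌈k⌉₊ ≤ (x : ℕ)
        · simpa [hx, Nat.ceil_le.mp hx] using binomial_apply_le_pow_div_factorial p hp N x
        · have hk : ¬k ≤ ((x : ℕ) : ℝ) := fun h => hx (Nat.ceil_le.mpr h)
          simp [hx, hk]
    _ = ENNReal.ofReal (∑ i ∈ range (N + 1), if ⌈k⌉₊ ≤ i then (N * p : ℝ) ^ i / i ! else 0) := by
        rw [ENNReal.ofReal_sum_of_nonneg fun i _ => by positivity]
        exact Fin.sum_univ_eq_sum_range
          (fun i => ENNReal.ofReal (if ⌈k⌉₊ ≤ i then (N * p : ℝ) ^ i / i ! else 0)) _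
    _ = ENNReal.ofReal (∑ i ∈ Ico ⌈k⌉₊ (N + 1), (N * p : ℝ) ^ i / i !) := by
        rw [← sum_filter, range_eq_Ico, Ico_filter_le, max_eq_right (Nat.zero_le _)]

lemma binomial_toOuterMeasure_le_exp (p : ℝ≥0) (hp : p ≤ 1) (N : ℕ) (k : ℝ) {c : ℝ}
    (hc : 1 < c) :
    (binomial p hp N).toOuterMeasure {i | k ≤ (i : ℝ)}
      ≤ ENNReal.ofReal (c / (c - 1) * Real.exp (c * (N * p) - k * Real.log c)) := by
  refine (binomial_toOuterMeasure_le_sum p hp N k).trans (ENNReal.ofReal_le_ofReal ?_)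
  have hc₀ : 0 < c := by linarith
  have htail : c⁻¹ ^ ⌈k⌉₊ ≤ Real.exp (-(k * Real.log c)) := by
    rw [← Real.rpow_natCast, Real.inv_rpow hc₀.le, ← Real.rpow_neg hc₀.le,
      Real.rpow_def_of_pos hc₀]
    gcongr
    nlinarith [Nat.le_ceil k, Real.log_pos hc]
  calc ∑ i ∈ Finset.Ico ⌈k⌉₊ (N + 1), (N * p : ℝ) ^ i / i !
      ≤ c / (c - 1) * Real.exp (c * (N * p)) * c⁻¹ ^ ⌈k⌉₊ :=
        sum_Ico_pow_div_factorial_le (by positivity) hc _ _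
    _ ≤ c / (c - 1) * Real.exp (c * (N * p)) * Real.exp (-(k * Real.log c)) := by
        have : 0 < c - 1 := by linarith
        gcongr
    _ = c / (c - 1) * Real.exp (c * (N * p) - k * Real.log c) := by
        rw [mul_assoc, ← Real.exp_add, ← sub_eq_add_neg]

end PMF
lemma natFloor_div_mul_mul_div_sq_le {n γ ℓ' : ℝ} (hn : 0 < n) (hγ : 0 < γ) (hℓ' : 0 < ℓ') :
    (⌊n / (γ * ℓ') * n⌋₊ : ℝ) * (ℓ' / n) ^ 2 ≤ ℓ' / γ := by
  calc (⌊n / (γ * ℓ') * n⌋₊ : ℝ) * (ℓ' / n) ^ 2 ≤ n / (γ * ℓ') * n * (ℓ' / n) ^ 2 := by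
        gcongr; exact Nat.floor_le (by positivity)
    _ = ℓ' / γ := by field_simp

theorem twoChoices_chernoff_step_general
    (γ n ℓ ℓ' : ℝ) (hγ : 18 ≤ γ) (hn : 2 ≤ n)
    (hℓ' : γ * Real.log n ≤ ℓ') (hℓ : ℓ ≤ ℓ' / 2)
    (hp : ENNReal.ofReal ((ℓ' / n) ^ 2) ≤ 1)
    (N : ℕ) (hN : N = ⌊n / (γ * ℓ') * n⌋₊) :
    max (2 * (N * (ℓ' / n) ^ 2)) (γ / 2 * Real.log n) ≤ ℓ' - ℓ ∧
    (PMF.binomial (ENNReal.ofReal ((ℓ' / n) ^ 2)).toNNReal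
        (ENNReal.toNNReal_mono ENNReal.one_ne_top hp) N).toOuterMeasure
        {i : Fin (N + 1) | ℓ' - ℓ ≤ (i : ℝ)}
      ≤ ENNReal.ofReal (Real.exp (-(γ / 6 * Real.log n))) ∧
    Real.exp (-(γ / 6 * Real.log n)) ≤ n ^ (-3 : ℝ) := by
  have hn₀ : 0 < n := by linarith
  have hlog : 0.69 < Real.log n :=
    (Real.log_two_gt_d9.trans_le' (by norm_num)).trans_le (Real.log_le_log (by norm_num) hn)
  have hℓ'₀ : 3 < ℓ' := by nlinarith
  have hmean : N * (ℓ' / n) ^ 2 ≤ ℓ' / 18 := by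
    subst hN
    exact (natFloor_div_mul_mul_div_sq_le hn₀ (by linarith) (by linarith)).trans
      (div_le_div_of_nonneg_left (by linarith) (by norm_num) hγ)
  refine ⟨max_le (by linarith) (by nlinarith), ?_, ?_⟩
  · refine (PMF.binomial_toOuterMeasure_le_exp _ _ N (ℓ' - ℓ) (by norm_num : (1 : ℝ) < 9)).trans
      (ENNReal.ofReal_le_ofReal ?_)
    rw [ENNReal.coe_toNNReal_eq_toReal, ENNReal.toReal_ofReal (sq_nonneg _)]
    have hlog9 : 2 < Real.log 9 := by
      rw [show (9 : ℝ) = 3 ^ 2 by norm_num, Real.log_pow, Nat.cast_ofNat]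
      linarith [Real.log_three_gt_d9]
    have hdecay : 2 * (ℓ' - ℓ) ≤ (ℓ' - ℓ) * Real.log 9 := by nlinarith
    calc 9 / (9 - 1) * Real.exp (9 * (N * (ℓ' / n) ^ 2) - (ℓ' - ℓ) * Real.log 9)
        ≤ Real.exp 1 * Real.exp (9 * (N * (ℓ' / n) ^ 2) - (ℓ' - ℓ) * Real.log 9) := by
          gcongr; linarith [Real.add_one_le_exp 1]
      _ = Real.exp (1 + (9 * (N * (ℓ' / n) ^ 2) - (ℓ' - ℓ) * Real.log 9)) := (Real.exp_add ..).symm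
      _ ≤ Real.exp (-(γ / 6 * Real.log n)) := by gcongr; linarith
  · calc Real.exp (-(γ / 6 * Real.log n)) = n ^ (-(γ / 6)) := by
          rw [Real.rpow_def_of_pos hn₀]; ring_nf
      _ ≤ n ^ (-3 : ℝ) := Real.rpow_le_rpow_of_exponent_le (by linarith) (by linarith)

/-- the Chernoff concentration step in the lower bound for 2-Choices.
With γ ≥ 18, n ≥ 2, ℓ' ≥ γ·log n, 0 < ℓ ≤ ℓ'/2, p = (ℓ'/n)², t₀ = n/(γℓ'), and
B ~ Bin(⌊t₀·n⌋, p), we have max{2·E[B], (γ/2)·log n} ≤ ℓ' − ℓ and consequently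
P(B ≥ ℓ' − ℓ) ≤ exp(−(γ/6)·log n) ≤ n^{−3}. -/
theorem twoChoices_chernoff_step
    (γ n ℓ ℓ' : ℝ) (hγ : 18 ≤ γ) (hn : 2 ≤ n)
    (hℓ' : γ * Real.log n ≤ ℓ') (hℓpos : 0 < ℓ) (hℓ : ℓ ≤ ℓ' / 2)
    (hℓn : ℓ' ≤ n)
    (hp : ENNReal.ofReal ((ℓ' / n) ^ 2) ≤ 1)
    (N : ℕ) (hN : N = ⌊n / (γ * ℓ') * n⌋₊) :
    max (2 * (N * (ℓ' / n) ^ 2)) (γ / 2 * Real.log n) ≤ ℓ' - ℓ ∧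
    (PMF.binomial (ENNReal.ofReal ((ℓ' / n) ^ 2)).toNNReal
        (ENNReal.toNNReal_mono ENNReal.one_ne_top hp) N).toOuterMeasure
        {i : Fin (N + 1) | ℓ' - ℓ ≤ (i : ℝ)}
      ≤ ENNReal.ofReal (Real.exp (-(γ / 6 * Real.log n))) ∧
    Real.exp (-(γ / 6 * Real.log n)) ≤ n ^ (-3 : ℝ) :=
  twoChoices_chernoff_step_general γ n ℓ ℓ' hγ hn hℓ' hℓ hp N hN
end
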